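/- In the A_1 case (one-row tableaux over {1,2}), the total energies E_l = E_l(b) of a path b = b_1 ⊗ ⋯ ⊗ b_L, defined via the carrier recursion with highest carrier u_l ∈ B^{1,l}, form a sequence such that the differences E_l − E_{l−1} (with E_0 = 0) are weakly decreasing nonnegative integers; equivalently, there exists a partition μ with E_l = Q_l(μ) = Σ_i min(l, μ_i) for all l ≥ 1. -/

import Mathlib

/-!
A row of `B^{1,l}` over `{1,2}` is `1^a 2^(l-a)`, and inserting one such row into another is
explicit: the energy is `H(1^a 2^b ⊗ 1^p 2^q) = min a q`, and the carrier recursion says that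
the number `a_j` of letters `1` in the carrier evolves by
`a_{j+1} = min (a_j + p_j) l - min a_j q_j`.
The partial energies `S_n(l)` and `T_n(l) = a_n(l) + S_n(l)` then obey the tropical recursion
`S_{n+1} = min T_n (S_n + q_n)`, `T_{n+1} = min (T_n + p_n) (S_n + l)`, so `E_l` is a minimum of
affine functions of `l` with natural slopes: it is nondecreasing and concave. Being bounded and
zero at `l = 0`, its increments form a partition `d`, and `E_l = Σ_i min l μ_i` for the
conjugate partition `μ`.
-/

/-- Schensted row insertion into a single row: returns the new row and the bumped entry. -/
def insertRow : List ℕ → ℕ → List ℕ × Option ℕ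
  | [], x => ([x], none)
  | y :: ys, x =>
    if x < y then (x :: ys, some y)
    else
      let p := insertRow ys x
      (y :: p.1, p.2)

/-- Schensted row insertion of a letter into a tableau (list of rows). -/
def rsInsert : List (List ℕ) → ℕ → List (List ℕ)
  | [], x => [[x]]
  | r :: rs, x =>
    match (insertRow r x).2 with
    | none => (insertRow r x).1 :: rs
    | some y => (insertRow r x).1 :: rsInsert rs y

/-- Successive insertion of a word. -/
def rsInsertWord (Y : List (List ℕ)) (w : List ℕ) : List (List ℕ) :=
  w.foldl rsInsert Y

/-- The row word of a tableau: rows read from bottom to top. -/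
def rowWord (Y : List (List ℕ)) : List ℕ := Y.reverse.flatten

/-- Length of the `i`-th row (the shape of the tableau). -/
def shapeAt (Y : List (List ℕ)) (i : ℕ) : ℕ := (Y.getD i []).length

/-- The highest element of `B^{r,s}`: row `i` filled with `i`. -/
def highestTab (r s : ℕ) : List (List ℕ) :=
  (List.range r).map fun i => List.replicate s (i + 1)

/-- Energy function: number of boxes of `(b' ← row(b))` outside the
concatenation of the shapes of `b` and `b'`. -/
def energyH (b b' : List (List ℕ)) : ℕ :=
  let Z := rsInsertWord b' (rowWord b)
  ∑ i ∈ Finset.range Z.length, (shapeAt Z i - (shapeAt b i + shapeAt b' i))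

/-- Semistandard Young tableau: rows weakly increasing, nonempty,
shape weakly decreasing, and columns strictly increasing. -/
def IsSSYT (Y : List (List ℕ)) : Prop :=
  (∀ r ∈ Y, List.Chain' (· ≤ ·) r) ∧
  (∀ r ∈ Y, r ≠ []) ∧
  List.Chain' (fun r s => s.length ≤ r.length ∧
    ∀ i < s.length, r.getD i 0 < s.getD i 0) Y

open Finset

def binaryRow (p q : ℕ) : List ℕ := List.replicate p 1 ++ List.replicate q 2

@[simp] lemma binaryRow_zero_left (q : ℕ) : binaryRow 0 q = List.replicate q 2 := rfl

lemma binaryRow_succ_left (p q : ℕ) : binaryRow (p + 1) q = 1 :: binaryRow p q := rfl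

@[simp] lemma length_binaryRow (p q : ℕ) : (binaryRow p q).length = p + q := by
  simp [binaryRow]

@[simp] lemma count_one_binaryRow (p q : ℕ) : (binaryRow p q).count 1 = p := by
  simp [binaryRow, List.count_replicate]

@[simp] lemma count_two_binaryRow (p q : ℕ) : (binaryRow p q).count 2 = q := by
  simp [binaryRow, List.count_replicate]

lemma eq_binaryRow_of_chain {r : List ℕ} (hr : List.IsChain (· ≤ ·) r)
    (h12 : ∀ x ∈ r, x = 1 ∨ x = 2) : r = binaryRow (r.count 1) (r.count 2) := by
  rw [List.isChain_iff_pairwise] at hr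
  induction r with
  | nil => rfl
  | cons x xs ih =>
    obtain ⟨hx, hxs⟩ := List.pairwise_cons.1 hr
    have h12' : ∀ y ∈ xs, y = 1 ∨ y = 2 := fun y hy => h12 y (List.mem_cons_of_mem _ hy)
    obtain rfl | rfl := h12 x List.mem_cons_self
    · conv_lhs => rw [ih hxs h12']
      simp [binaryRow, List.replicate_succ]
    · have hall : ∀ y ∈ xs, y = 2 := fun y hy => by
        have := hx y hy; have := h12' y hy; omega
      rw [List.eq_replicate_of_mem hall]
      simp [binaryRow, List.count_replicate, List.replicate_succ]

lemma insertRow_binaryRow_two (p q : ℕ) :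
    insertRow (binaryRow p q) 2 = (binaryRow p (q + 1), none) := by
  induction p with
  | zero =>
    induction q with
    | zero => rfl
    | succ q ih => simp_all [List.replicate_succ, insertRow]
  | succ p ih => simp [binaryRow_succ_left, insertRow, ih]

lemma insertRow_binaryRow_zero_one (p : ℕ) :
    insertRow (binaryRow p 0) 1 = (binaryRow (p + 1) 0, none) := by
  induction p with
  | zero => rfl
  | succ p ih => simp [binaryRow_succ_left, insertRow, ih]

lemma insertRow_binaryRow_succ_one (p q : ℕ) :
    insertRow (binaryRow p (q + 1)) 1 = (binaryRow (p + 1) q, some 2) := by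
  induction p with
  | zero => simp [binaryRow, List.replicate_succ, insertRow]
  | succ p ih => simp [binaryRow_succ_left, insertRow, ih]

def binaryTab (p q m : ℕ) : List (List ℕ) :=
  binaryRow p q :: if m = 0 then [] else [List.replicate m 2]

lemma binaryTab_zero (p q : ℕ) : binaryTab p q 0 = [binaryRow p q] := rfl

lemma rsInsert_binaryTab_two (p q m : ℕ) :
    rsInsert (binaryTab p q m) 2 = binaryTab p (q + 1) m := by
  simp [binaryTab, rsInsert, insertRow_binaryRow_two]

lemma rsInsert_binaryTab_zero_one (p m : ℕ) :
    rsInsert (binaryTab p 0 m) 1 = binaryTab (p + 1) 0 m := by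
  simp [binaryTab, rsInsert, insertRow_binaryRow_zero_one]

lemma rsInsert_binaryTab_succ_one (p q m : ℕ) :
    rsInsert (binaryTab p (q + 1) m) 1 = binaryTab (p + 1) q (m + 1) := by
  cases m with
  | zero => simp [binaryTab, rsInsert, insertRow_binaryRow_succ_one]
  | succ m =>
    have := insertRow_binaryRow_two 0 (m + 1)
    simp_all [binaryTab, rsInsert, insertRow_binaryRow_succ_one]

lemma rsInsertWord_cons (Y : List (List ℕ)) (x : ℕ) (w : List ℕ) :
    rsInsertWord Y (x :: w) = rsInsertWord (rsInsert Y x) w := rfl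

lemma rsInsertWord_append (Y : List (List ℕ)) (w w' : List ℕ) :
    rsInsertWord Y (w ++ w') = rsInsertWord (rsInsertWord Y w) w' :=
  List.foldl_append

lemma rsInsertWord_binaryTab_replicate_one (a p q m : ℕ) :
    rsInsertWord (binaryTab p q m) (List.replicate a 1)
      = binaryTab (p + a) (q - min a q) (m + min a q) := by
  induction a generalizing p q m with
  | zero => simp [rsInsertWord]
  | succ a ih =>
    rw [List.replicate_succ, rsInsertWord_cons]
    cases q with
    | zero => rw [rsInsert_binaryTab_zero_one, ih]; congr 1 <;> omega
    | succ q => rw [rsInsert_binaryTab_succ_one, ih]; congr 1 <;> omega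

lemma rsInsertWord_binaryTab_replicate_two (b p q m : ℕ) :
    rsInsertWord (binaryTab p q m) (List.replicate b 2) = binaryTab p (q + b) m := by
  induction b generalizing q with
  | zero => rfl
  | succ b ih =>
    rw [List.replicate_succ, rsInsertWord_cons, rsInsert_binaryTab_two, ih, Nat.add_right_comm,
      Nat.add_assoc]

/-- Each of the first `min a q` letters `1` bumps a `2` into the second row. -/
lemma rsInsertWord_binaryRow (p q a b : ℕ) :
    rsInsertWord [binaryRow p q] (binaryRow a b)
      = binaryTab (p + a) (q - min a q + b) (min a q) := by
  rw [← binaryTab_zero, binaryRow, rsInsertWord_append, rsInsertWord_binaryTab_replicate_one,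
    rsInsertWord_binaryTab_replicate_two, Nat.zero_add]

lemma binaryTab_inj {p q m p' q' m' : ℕ} (h : binaryTab p q m = binaryTab p' q' m') :
    p = p' ∧ q = q' ∧ m = m' := by
  obtain ⟨hrow, hrest⟩ := List.cons_eq_cons.1 h
  refine ⟨by simpa using congrArg (List.count 1) hrow,
    by simpa using congrArg (List.count 2) hrow, ?_⟩
  by_cases hm : m = 0 <;> by_cases hm' : m' = 0 <;> simp_all

lemma energyH_binaryRow (a b p q : ℕ) :
    energyH [binaryRow a b] [binaryRow p q] = min a q := by
  rw [energyH, rowWord]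
  simp only [List.reverse_singleton, List.flatten_singleton, rsInsertWord_binaryRow]
  by_cases h : min a q = 0
  · simp [binaryTab, shapeAt, h]
    omega
  · simp [binaryTab, shapeAt, h, Finset.sum_range_succ]
    omega

/-- The combinatorial `R` on `B^{1,l} ⊗ B^{1,s}` for `A_1`, read off on the carrier. -/
lemma count_one_of_rsInsertWord_eq {l a b p q A B P Q : ℕ} (hab : a + b = l) (hAB : A + B = l)
    (h : rsInsertWord [binaryRow p q] (binaryRow a b)
      = rsInsertWord [binaryRow A B] (binaryRow P Q)) :
    A = min (a + p) l - min a q := by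
  rw [rsInsertWord_binaryRow, rsInsertWord_binaryRow] at h
  obtain ⟨hones, -, hbumped⟩ := binaryTab_inj h
  omega

/-- Number of letters `1` in the carrier `u_{l,j}` when the path has rows `1^{p j} 2^{q j}`. -/
def carrierOnes (p q : ℕ → ℕ) (l : ℕ) : ℕ → ℕ
  | 0 => l
  | j + 1 => min (carrierOnes p q l j + p j) l - min (carrierOnes p q l j) (q j)

lemma carrierOnes_le (p q : ℕ → ℕ) (l : ℕ) : ∀ j, carrierOnes p q l j ≤ l
  | 0 => le_rfl
  | _ + 1 => (Nat.sub_le _ _).trans (min_le_right _ _)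

def carrierEnergy (p q : ℕ → ℕ) (n l : ℕ) : ℕ :=
  ∑ j ∈ range n, min (carrierOnes p q l j) (q j)

lemma carrierEnergy_succ (p q : ℕ → ℕ) (n l : ℕ) :
    carrierEnergy p q (n + 1) l
      = min (carrierOnes p q l n + carrierEnergy p q n l) (carrierEnergy p q n l + q n) := by
  rw [carrierEnergy, sum_range_succ, ← carrierEnergy]
  omega

lemma carrierOnes_add_carrierEnergy_succ (p q : ℕ → ℕ) (n l : ℕ) :
    carrierOnes p q l (n + 1) + carrierEnergy p q (n + 1) l
      = min (carrierOnes p q l n + carrierEnergy p q n l + p n) (carrierEnergy p q n l + l) := by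
  have := carrierOnes_le p q l n
  rw [carrierEnergy, sum_range_succ, ← carrierEnergy, carrierOnes]
  omega

lemma carrier_eq_binaryRow {L l : ℕ} {brow u : ℕ → List ℕ} {p q : ℕ → ℕ}
    (hbrow : ∀ j < L, brow j = binaryRow (p j) (q j))
    (hu0 : u 0 = List.replicate l 1)
    (hcar : ∀ j < L, (u (j + 1)).length = l ∧
      List.IsChain (· ≤ ·) (u (j + 1)) ∧ ∀ x ∈ u (j + 1), x = 1 ∨ x = 2)
    (hrel : ∀ j < L, ∃ b' : List ℕ, List.IsChain (· ≤ ·) b' ∧ (∀ x ∈ b', x = 1 ∨ x = 2) ∧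
      rsInsertWord [brow j] (u j) = rsInsertWord [u (j + 1)] b') :
    ∀ j ≤ L, u j = binaryRow (carrierOnes p q l j) (l - carrierOnes p q l j) := by
  intro j hj
  induction j with
  | zero => simp [hu0, carrierOnes, binaryRow]
  | succ j ih =>
    obtain ⟨hlen, hchain, h12⟩ := hcar j hj
    obtain ⟨b', hchain', h12', hR⟩ := hrel j hj
    have hu := eq_binaryRow_of_chain hchain h12
    have hlen' : (u (j + 1)).count 1 + (u (j + 1)).count 2 = l := by
      rw [← hlen, hu, length_binaryRow, count_one_binaryRow, count_two_binaryRow]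
    rw [ih (by omega), hbrow j hj, hu, eq_binaryRow_of_chain hchain' h12'] at hR
    have hA := count_one_of_rsInsertWord_eq (by have := carrierOnes_le p q l j; omega) hlen' hR
    rw [hu, carrierOnes, ← hA]
    congr 1
    omega

def HasAffineSupport (f : ℕ → ℕ) : Prop :=
  ∀ l, ∃ k c : ℕ, f l = k * l + c ∧ ∀ m, f m ≤ k * m + c

namespace HasAffineSupport

lemma const (c : ℕ) : HasAffineSupport fun _ => c :=
  fun _ => ⟨0, c, by simp, fun _ => by simp⟩

lemma id : HasAffineSupport fun l => l :=
  fun _ => ⟨1, 0, by simp, fun _ => by simp⟩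

variable {f g : ℕ → ℕ}

lemma add (hf : HasAffineSupport f) (hg : HasAffineSupport g) :
    HasAffineSupport fun l => f l + g l := by
  intro l
  obtain ⟨k, c, hl, hle⟩ := hf l
  obtain ⟨k', c', hl', hle'⟩ := hg l
  refine ⟨k + k', c + c', by simp only [hl, hl']; ring, fun m => ?_⟩
  exact (add_le_add (hle m) (hle' m)).trans_eq (by ring)

lemma min (hf : HasAffineSupport f) (hg : HasAffineSupport g) :
    HasAffineSupport fun l => min (f l) (g l) := by
  intro l
  rcases le_total (f l) (g l) with h | h
  · obtain ⟨k, c, hl, hle⟩ := hf l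
    exact ⟨k, c, by beta_reduce; rw [min_eq_left h, hl], fun m => (min_le_left _ _).trans (hle m)⟩
  · obtain ⟨k, c, hl, hle⟩ := hg l
    exact ⟨k, c, by beta_reduce; rw [min_eq_right h, hl], fun m => (min_le_right _ _).trans (hle m)⟩

lemma monotone (hf : HasAffineSupport f) : Monotone f := by
  intro l m hlm
  obtain ⟨k, c, hm, hle⟩ := hf m
  calc f l ≤ k * l + c := hle l
    _ ≤ k * m + c := by gcongr
    _ = f m := hm.symm

lemma concave (hf : HasAffineSupport f) (l : ℕ) : f (l + 2) + f l ≤ 2 * f (l + 1) := by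
  obtain ⟨k, c, hl, hle⟩ := hf (l + 1)
  have h2 := hle (l + 2)
  have h0 := hle l
  rw [hl]
  linarith

end HasAffineSupport

lemma hasAffineSupport_carrierEnergy_and_carrierOnes_add (p q : ℕ → ℕ) (n : ℕ) :
    HasAffineSupport (carrierEnergy p q n) ∧
      HasAffineSupport fun l => carrierOnes p q l n + carrierEnergy p q n l := by
  induction n with
  | zero => simpa [carrierEnergy, carrierOnes] using
      ⟨HasAffineSupport.const 0, HasAffineSupport.id⟩
  | succ n ih =>
    obtain ⟨hS, hT⟩ := ih
    refine ⟨?_, ?_⟩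
    · convert hT.min (hS.add (.const (q n))) using 1
      exact funext (carrierEnergy_succ p q n)
    · convert (hT.add (.const (p n))).min (hS.add .id) using 1
      exact funext (carrierOnes_add_carrierEnergy_succ p q n)

/-- `μ` is the conjugate of the partition `d`. -/
lemma exists_sum_min_eq_sum_of_antitone {d : ℕ → ℕ} (hd : Antitone d) {N : ℕ} (hN : d N = 0) :
    ∃ μ : List ℕ, μ.Pairwise (· ≥ ·) ∧
      ∀ l, (μ.map fun x => min l x).sum = ∑ k ∈ range l, d k := by
  set row : ℕ → ℕ := fun i => #{k ∈ range N | i < d k}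
  have lt_row_iff : ∀ i k, k < row i ↔ i < d k := by
    intro i k
    constructor
    · intro hk
      by_contra! hik
      have hsub : {k' ∈ range N | i < d k'} ⊆ range k := fun k' hk' => by
        rw [mem_filter] at hk'
        exact mem_range.2 (lt_of_not_ge fun h => by have := hd h; omega)
      have := card_le_card hsub
      rw [card_range] at this
      exact absurd hk (not_lt.2 this)
    · intro hik
      have hkN : k < N := lt_of_not_ge fun h => by have := hd h; omega
      have hsub : range (k + 1) ⊆ {k' ∈ range N | i < d k'} := fun k' hk' => by
        rw [mem_range] at hk'
        exact mem_filter.2 ⟨mem_range.2 (by omega), hik.trans_le (hd (by omega))⟩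
      have := card_le_card hsub
      rwa [card_range] at this
  have min_row : ∀ l i, min l (row i) = #{k ∈ range l | i < d k} := by
    intro l i
    have : {k ∈ range l | i < d k} = range (min l (row i)) := by
      ext k
      simp only [mem_filter, mem_range, lt_min_iff, lt_row_iff]
    rw [this, card_range]
  have card_lt : ∀ k, #{i ∈ range (d 0) | i < d k} = d k := by
    intro k
    have hk : d k ≤ d 0 := hd (Nat.zero_le k)
    have : {i ∈ range (d 0) | i < d k} = range (d k) := by
      ext i
      simp only [mem_filter, mem_range]
      omega
    rw [this, card_range]
  refine ⟨(List.range (d 0)).map row, List.pairwise_lt_range.map _ fun i j hij => ?_, fun l => ?_⟩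
  · exact card_le_card (monotone_filter_right _ fun _ _ hjk => hij.trans hjk)
  · calc ((List.range (d 0)).map row |>.map fun x => min l x).sum
        = ∑ i ∈ range (d 0), #{k ∈ range l | i < d k} := by
          simp only [List.map_map, Function.comp_def, min_row]
          simp [sum_eq_multiset_sum, Multiset.range]
      _ = ∑ k ∈ range l, #{i ∈ range (d 0) | i < d k} := by
          simp only [card_filter]
          exact sum_comm
      _ = ∑ k ∈ range l, d k := by simp only [card_lt]

lemma exists_partition_of_hasAffineSupport {E : ℕ → ℕ} (hE : HasAffineSupport E) (h0 : E 0 = 0)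
    {B : ℕ} (hB : ∀ l, E l ≤ B) :
    ∃ μ : List ℕ, μ.Pairwise (· ≥ ·) ∧ ∀ l, (μ.map fun x => min l x).sum = E l := by
  have hmono := hE.monotone
  have hsum : ∀ l, ∑ k ∈ range l, (E (k + 1) - E k) = E l := fun l => by
    rw [sum_range_tsub hmono, h0, Nat.sub_zero]
  have hanti : Antitone fun k => E (k + 1) - E k := antitone_nat_of_succ_le fun k => by
    show E (k + 2) - E (k + 1) ≤ E (k + 1) - E k
    have := hE.concave k
    have := hmono k.le_succ
    have := hmono (k + 1).le_succ
    omega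
  have hvanish : E (B + 1) - E B = 0 := by
    by_contra hpos
    have : B + 1 ≤ E (B + 1) := by
      rw [← hsum]
      calc B + 1 = ∑ k ∈ range (B + 1), 1 := by simp
        _ ≤ _ := sum_le_sum fun k hk => by
          have : E (B + 1) - E B ≤ E (k + 1) - E k := hanti (mem_range_succ_iff.1 hk)
          omega
    have := hB (B + 1)
    omega
  obtain ⟨μ, hμ, hμsum⟩ := exists_sum_min_eq_sum_of_antitone hanti hvanish
  exact ⟨μ, hμ, fun l => (hμsum l).trans (hsum l)⟩

/-- In the `A_1` case, the total energies `E_l` of a path, computed via the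
carrier recursion (carriers `u l j ∈ B^{1,l}`, initial carrier all-`1`,
related by the insertion form of the combinatorial `R`), are of the form
`E_l = Q_l(μ) = Σ_i min(l, μ_i)` for some partition `μ`. -/
theorem A1_energies_are_Ql_of_partition (L : ℕ) (brow : ℕ → List ℕ)
    (u : ℕ → ℕ → List ℕ)
    (hb : ∀ j < L, List.Chain' (· ≤ ·) (brow j) ∧ ∀ x ∈ brow j, x = 1 ∨ x = 2)
    (hu0 : ∀ l, u l 0 = List.replicate l 1)
    (hcar : ∀ l, ∀ j < L, (u l (j + 1)).length = l ∧
      List.Chain' (· ≤ ·) (u l (j + 1)) ∧ ∀ x ∈ u l (j + 1), x = 1 ∨ x = 2)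
    (hrel : ∀ l, ∀ j < L, ∃ b' : List ℕ,
      b'.length = (brow j).length ∧ List.Chain' (· ≤ ·) b' ∧
      (∀ x ∈ b', x = 1 ∨ x = 2) ∧
      rsInsertWord [brow j] (u l j) = rsInsertWord [u l (j + 1)] b') :
    ∃ μ : List ℕ, List.Pairwise (· ≥ ·) μ ∧
      ∀ l, 1 ≤ l →
        (∑ j ∈ Finset.range L, energyH [u l j] [brow j])
          = (μ.map (fun x => min l x)).sum := by
  set p : ℕ → ℕ := fun j => (brow j).count 1
  set q : ℕ → ℕ := fun j => (brow j).count 2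
  have hbrow : ∀ j < L, brow j = binaryRow (p j) (q j) := fun j hj =>
    eq_binaryRow_of_chain (hb j hj).1 (hb j hj).2
  have hE : ∀ l, ∑ j ∈ range L, energyH [u l j] [brow j] = carrierEnergy p q L l := by
    refine fun l => sum_congr rfl fun j hj => ?_
    have hu := carrier_eq_binaryRow hbrow (hu0 l) (hcar l)
      (fun j hj => (hrel l j hj).imp fun _ => And.right) j (mem_range.1 hj).le
    rw [hu, hbrow j (mem_range.1 hj), energyH_binaryRow]
  have hE0 : carrierEnergy p q L 0 = 0 :=
    sum_eq_zero fun j _ => by simp [Nat.le_zero.1 (carrierOnes_le p q 0 j)]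
  obtain ⟨μ, hμ, hμE⟩ := exists_partition_of_hasAffineSupport
    (hasAffineSupport_carrierEnergy_and_carrierOnes_add p q L).1 hE0 (B := ∑ j ∈ range L, q j)
    fun l => sum_le_sum fun j _ => min_le_right _ _
  exact ⟨μ, hμ, fun l _ => by rw [hE, hμE]⟩
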